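/- L²-stability of the symplectic local discontinuous Galerkin method (Corollary 2.4): Under the mesh setup of the LDG method with periodic fluxes, suppose for each time step n = 0, 1, …, N−1 the cell equations (E1_j), (E2_j) hold linking the level-n solution (u_j^n)_{j=1..J} to the level-(n+1) solution (u_j^{n+1})_{j=1..J}, with step-dependent auxiliary variables (ψ_j^{n+1/2})_{j} and step-dependent real noise increments ΔW̃_n. Then the discrete L²-norm is constant in n: ∑_{j=1}^{J} ∫_{I_j} |u_j^N(x)|² dx = ∑_{j=1}^{J} ∫_{I_j} |u_j^0(x)|² dx for every N. -/

import Mathlib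

/-!
Fix a time step. The imaginary part of `(E1_j)` gives `Re ∫_{I_j} (u^{n+1} - u^n) conj u_j`,
since the `|ψ_j|²`, `Q_h |u_j|²` and `ΔW̃_n |u_j|²` integrals are real. Integrating by parts and
using the conjugate of `(E2_j)` cancels the volume term `∫ ψ_j (conj u_j)'`, leaving
`Δt · Im(ψ̂_{j+1/2} conj u_j(x_{j+1/2}) - conj û_{j-1/2} ψ_j(x_{j-1/2}))`. With the alternating
fluxes `û = u⁻`, `ψ̂ = ψ⁺` the second term on cell `j + 1` is the first term on cell `j`, so these
boundary terms cancel around the periodic mesh. Pointwise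
`Re((w - v) conj((v + w) / 2)) = (|w|² - |v|²) / 2`, so each time step conserves the discrete
charge.
-/

open MeasureTheory Complex ComplexConjugate Set

theorem Complex.re_sub_mul_conj_midpoint (v w : ℂ) :
    ((w - v) * conj ((v + w) / 2)).re = (‖w‖ ^ 2 - ‖v‖ ^ 2) / 2 := by
  simp only [Complex.sq_norm, normSq_apply, mul_re, sub_re, sub_im, conj_re, conj_im, div_re,
    div_im, add_re, add_im]
  norm_num
  ring

theorem intervalIntegral.im_integral_eq_zero_of_forall_im_eq_zero {F : ℝ → ℂ} {a b : ℝ}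
    (hF : ∀ t, (F t).im = 0) :
    (∫ t in a..b, F t).im = 0 := by
  have hF' : F = fun t => ((F t).re : ℂ) := funext fun t => Complex.ext rfl (by simp [hF])
  rw [hF', intervalIntegral.integral_ofReal, ofReal_im]

theorem Finset.sum_range_cyclic_shift {M : Type*} [AddCommMonoid M] (J : ℕ) (G : ℕ → M) :
    ∑ c ∈ Finset.range J, G (if c + 1 = J then 0 else c + 1) = ∑ c ∈ Finset.range J, G c := by
  cases J with
  | zero => simp
  | succ k =>
    rw [Finset.sum_range_succ, Finset.sum_range_succ', if_pos rfl]
    congr 1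
    exact Finset.sum_congr rfl fun c hc => by
      rw [if_neg (by simp at hc; omega)]

theorem intervalIntegral.re_integral_sub_mul_conj_midpoint {v w m : ℝ → ℂ} {a b : ℝ}
    (hab : a ≤ b) (hv : ContinuousOn v (Icc a b)) (hw : ContinuousOn w (Icc a b))
    (hm : ∀ t, m t = (v t + w t) / 2) :
    (∫ t in a..b, (w t - v t) * conj (m t)).re
      = ((∫ t in a..b, ‖w t‖ ^ 2) - ∫ t in a..b, ‖v t‖ ^ 2) / 2 := by
  simp only [hm]
  rw [← uIcc_of_le hab] at hv hw
  have hvw : ContinuousOn (fun t => (w t - v t) * conj ((v t + w t) / 2)) (uIcc a b) := by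
    fun_prop
  have hre := intervalIntegral.intervalIntegral_re (hvw.intervalIntegrable (μ := volume))
  simp only [RCLike.re_to_complex, re_sub_mul_conj_midpoint] at hre
  rw [← hre]
  have hw2 : ContinuousOn (fun t => ‖w t‖ ^ 2) (uIcc a b) := by fun_prop
  have hv2 : ContinuousOn (fun t => ‖v t‖ ^ 2) (uIcc a b) := by fun_prop
  rw [intervalIntegral.integral_div, intervalIntegral.integral_sub
    (hw2.intervalIntegrable (μ := volume)) (hv2.intervalIntegrable (μ := volume))]

theorem intervalIntegral.integral_mul_derivWithin_conj_add_conj {f g : ℝ → ℂ} {a b : ℝ}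
    (hab : a < b) (hf : ContDiffOn ℝ 1 f (Icc a b)) (hg : ContDiffOn ℝ 1 g (Icc a b)) :
    (∫ t in a..b, f t * derivWithin (fun y => conj (g y)) (Icc a b) t)
      + conj (∫ t in a..b, g t * derivWithin (fun y => conj (f y)) (Icc a b) t)
      = f b * conj (g b) - f a * conj (g a) := by
  have hg' : ContDiffOn ℝ 1 (fun y => conj (g y)) (Icc a b) :=
    conjCLE.toContinuousLinearMap.contDiff.comp_contDiffOn hg
  have hIcc : uIcc a b = Icc a b := uIcc_of_le hab.le
  have hderiv {h : ℝ → ℂ} (hh : ContDiffOn ℝ 1 h (Icc a b)) :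
      ∀ t ∈ uIcc a b, HasDerivWithinAt h (derivWithin h (Icc a b) t) (uIcc a b) t := by
    rw [hIcc]
    exact fun t ht => (hh.differentiableOn one_ne_zero t ht).hasDerivWithinAt
  have hcont {h : ℝ → ℂ} (hh : ContDiffOn ℝ 1 h (Icc a b)) :
      IntervalIntegrable (derivWithin h (Icc a b)) volume a b := by
    refine ContinuousOn.intervalIntegrable ?_
    rw [hIcc]
    exact hh.continuousOn_derivWithin (uniqueDiffOn_Icc hab) le_rfl
  rw [integral_mul_deriv_eq_deriv_mul_of_hasDerivWithinAt (hderiv hf) (hderiv hg')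
    (hcont hf) (hcont hg'), ← intervalIntegral_conj]
  have hconj (t : ℝ) : derivWithin (fun y => conj (f y)) (Icc a b) t
      = conj (derivWithin f (Icc a b) t) := derivWithin.star
  simp only [map_mul, hconj, conj_conj, mul_comm (g _)]
  ring

theorem re_eq_flux_im_of_ldg_cell_equations {f m : ℝ → ℂ} {Q W : ℝ → ℝ} {a b Δt : ℝ}
    {S F w : ℂ} (hab : a < b) (hf : ContDiffOn ℝ 1 f (Icc a b)) (hm : ContDiffOn ℝ 1 m (Icc a b))
    (hQ : ContinuousOn Q (Icc a b))
    (hE1 : I * S - Δt * (F * conj (m b) - f a * conj (m a))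
        + Δt * (∫ t in a..b,
            (f t * derivWithin (fun y => conj (m y)) (Icc a b) t - Q t * (m t * conj (m t))))
        - (∫ t in a..b, m t * conj (m t) * W t) = 0)
    (hE2 : (∫ t in a..b, f t * conj (f t))
        + (∫ t in a..b, m t * derivWithin (fun y => conj (f y)) (Icc a b) t)
        - (m b * conj (f b) - w * conj (f a)) = 0) :
    S.re = Δt * (F * conj (m b) - conj w * f a).im := by
  have hIcc : uIcc a b = Icc a b := uIcc_of_le hab.le
  have hdm : ContinuousOn (derivWithin (fun y => conj (m y)) (Icc a b)) (Icc a b) :=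
    (conjCLE.toContinuousLinearMap.contDiff.comp_contDiffOn hm).continuousOn_derivWithin
      (uniqueDiffOn_Icc hab) le_rfl
  have hfm : IntervalIntegrable (fun t => f t * derivWithin (fun y => conj (m y)) (Icc a b) t)
      volume a b := by
    refine ContinuousOn.intervalIntegrable ?_
    rw [hIcc]
    exact hf.continuousOn.mul hdm
  have hQm : IntervalIntegrable (fun t => (Q t : ℂ) * (m t * conj (m t))) volume a b := by
    refine ContinuousOn.intervalIntegrable ?_
    rw [hIcc]
    have hmc := hm.continuousOn
    fun_prop
  have hf_real : (∫ t in a..b, f t * conj (f t)).im = 0 :=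
    intervalIntegral.im_integral_eq_zero_of_forall_im_eq_zero fun t => by simp [mul_conj]
  have hQ_real : (∫ t in a..b, (Q t : ℂ) * (m t * conj (m t))).im = 0 :=
    intervalIntegral.im_integral_eq_zero_of_forall_im_eq_zero fun t => by simp [mul_conj]
  have hW_real : (∫ t in a..b, m t * conj (m t) * W t).im = 0 :=
    intervalIntegral.im_integral_eq_zero_of_forall_im_eq_zero fun t => by simp [mul_conj]
  have ibp := intervalIntegral.integral_mul_derivWithin_conj_add_conj hab hf hm
  rw [intervalIntegral.integral_sub hfm hQm] at hE1
  have hE2c := congrArg conj hE2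
  simp only [map_add, map_sub, map_mul, conj_conj, map_zero] at hE2c
  have key : I * S = Δt * (F * conj (m b) - conj w * f a)
      - Δt * conj (∫ t in a..b, f t * conj (f t))
      + Δt * (∫ t in a..b, (Q t : ℂ) * (m t * conj (m t)))
      + ∫ t in a..b, m t * conj (m t) * W t := by
    linear_combination hE1 - Δt * ibp + Δt * hE2c
  simpa [hf_real, hQ_real, hW_real] using congrArg im key

theorem sum_periodic_flux_eq_zero (J : ℕ) (ψ m : ℕ → ℝ → ℂ) (x : ℕ → ℝ) :
    ∑ c ∈ Finset.range J,
      ((if c + 1 = J then ψ 0 (x 0) else ψ (c + 1) (x (c + 1))) * conj (m c (x (c + 1)))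
        - conj (if c = 0 then m (J - 1) (x J) else m (c - 1) (x c)) * ψ c (x c)) = 0 := by
  rw [Finset.sum_sub_distrib, sub_eq_zero, ← Finset.sum_range_cyclic_shift J fun c =>
    conj (if c = 0 then m (J - 1) (x J) else m (c - 1) (x c)) * ψ c (x c)]
  refine Finset.sum_congr rfl fun c hc => ?_
  have hc : c < J := Finset.mem_range.mp hc
  by_cases hlast : c + 1 = J
  · simp only [hlast, if_true]
    rw [show J - 1 = c by omega, mul_comm]
  · simp only [hlast, if_false, Nat.add_sub_cancel, Nat.add_one_ne_zero]
    rw [mul_comm]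

noncomputable def discreteCharge (J : ℕ) (x : ℕ → ℝ) (v : ℕ → ℝ → ℂ) : ℝ :=
  ∑ c ∈ Finset.range J, ∫ t in (x c)..(x (c + 1)), ‖v c t‖ ^ 2

theorem ldg_L2_stability_general
    (Δt : ℝ) (J : ℕ) (N : ℕ)
    (x : ℕ → ℝ) (hx : ∀ j < J, x j < x (j + 1))
    (u ψ : ℕ → ℕ → ℝ → ℂ)
    (hureg : ∀ n ≤ N, ∀ c < J, ContDiffOn ℝ 1 (u n c) (Set.Icc (x c) (x (c + 1))))
    (hψreg : ∀ n < N, ∀ c < J, ContDiffOn ℝ 1 (ψ n c) (Set.Icc (x c) (x (c + 1))))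
    (Qh : ℝ → ℝ) (hQ : Continuous Qh)
    (ΔW : ℕ → ℝ → ℝ)
    (um : ℕ → ℕ → ℝ → ℂ)
    (hum : ∀ n c, um n c = fun t => (u n c t + u (n + 1) c t) / 2)
    (hE1 : ∀ n < N, ∀ c < J,
      Complex.I * (∫ t in (x c)..(x (c + 1)), (u (n + 1) c t - u n c t) * conj (um n c t))
        - (Δt : ℂ) * ((if c + 1 = J then ψ n 0 (x 0) else ψ n (c + 1) (x (c + 1)))
              * conj (um n c (x (c + 1)))
            - ψ n c (x c) * conj (um n c (x c)))
        + (Δt : ℂ) * (∫ t in (x c)..(x (c + 1)),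
            (ψ n c t * derivWithin (fun y => conj (um n c y)) (Set.Icc (x c) (x (c + 1))) t
              - (Qh t : ℂ) * (um n c t * conj (um n c t))))
        - (∫ t in (x c)..(x (c + 1)), um n c t * conj (um n c t) * (ΔW n t : ℂ)) = 0)
    (hE2 : ∀ n < N, ∀ c < J,
      (∫ t in (x c)..(x (c + 1)), ψ n c t * conj (ψ n c t))
        + (∫ t in (x c)..(x (c + 1)),
            um n c t * derivWithin (fun y => conj (ψ n c y)) (Set.Icc (x c) (x (c + 1))) t)
        - (um n c (x (c + 1)) * conj (ψ n c (x (c + 1)))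
            - (if c = 0 then um n (J - 1) (x J) else um n (c - 1) (x c))
                * conj (ψ n c (x c))) = 0) :
    ∑ c ∈ Finset.range J, ∫ t in (x c)..(x (c + 1)), ‖u N c t‖ ^ 2
      = ∑ c ∈ Finset.range J, ∫ t in (x c)..(x (c + 1)), ‖u 0 c t‖ ^ 2 := by
  set flux : ℕ → ℕ → ℂ := fun n c =>
    (if c + 1 = J then ψ n 0 (x 0) else ψ n (c + 1) (x (c + 1))) * conj (um n c (x (c + 1)))
      - conj (if c = 0 then um n (J - 1) (x J) else um n (c - 1) (x c)) * ψ n c (x c)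
  have hcell : ∀ n < N, ∀ c < J, (∫ t in (x c)..(x (c + 1)), ‖u (n + 1) c t‖ ^ 2)
      - (∫ t in (x c)..(x (c + 1)), ‖u n c t‖ ^ 2) = 2 * Δt * (flux n c).im := by
    intro n hn c hc
    have hu0 := hureg n hn.le c hc
    have hu1 := hureg (n + 1) hn c hc
    have hm : ContDiffOn ℝ 1 (um n c) (Icc (x c) (x (c + 1))) :=
      hum n c ▸ (hu0.add hu1).div_const 2
    linarith [intervalIntegral.re_integral_sub_mul_conj_midpoint (hx c hc).le hu0.continuousOn
        hu1.continuousOn (congrFun (hum n c)),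
      re_eq_flux_im_of_ldg_cell_equations (hx c hc) (hψreg n hn c hc) hm hQ.continuousOn
        (hE1 n hn c hc) (hE2 n hn c hc)]
  have hstep : ∀ n < N, discreteCharge J x (u (n + 1)) - discreteCharge J x (u n) = 0 := by
    intro n hn
    rw [discreteCharge, discreteCharge, ← Finset.sum_sub_distrib,
      Finset.sum_congr rfl fun c hc => hcell n hn c (Finset.mem_range.mp hc), ← Finset.mul_sum,
      ← im_sum, sum_periodic_flux_eq_zero, zero_im, mul_zero]
  show discreteCharge J x (u N) = discreteCharge J x (u 0)
  rw [← sub_eq_zero, ← Finset.sum_range_sub (fun n => discreteCharge J x (u n)),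
    Finset.sum_eq_zero fun n hn => hstep n (Finset.mem_range.mp hn)]

/-- L²-stability of the symplectic local discontinuous Galerkin method (Corollary 2.4).
Cells are indexed by `c = 0, …, J−1` with cell `[x c, x (c+1)]`, `x 0 = L_f`, `x J = L_r`,
and periodic identification `x 0 ≡ x J`.  `u n c` is the level-`n` numerical solution on
cell `c`, `ψ n c` the step-`n` auxiliary variable, `um n c = (u n c + u (n+1) c)/2` the
midpoint, and `ΔW n` the step-`n` real noise increment.  If the cell equations (E1), (E2)
hold for every time step `n < N` and every cell, then the discrete L²-norm is constant:
`∑_c ∫_{I_c} |u N|² = ∑_c ∫_{I_c} |u 0|²`. -/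
theorem ldg_L2_stability
    (Δt Lf Lr : ℝ) (hΔt : 0 < Δt) (J : ℕ) (hJ : 1 ≤ J) (N : ℕ)
    (x : ℕ → ℝ) (hx : ∀ j < J, x j < x (j + 1)) (hxf : x 0 = Lf) (hxr : x J = Lr)
    (u ψ : ℕ → ℕ → ℝ → ℂ)
    (hureg : ∀ n ≤ N, ∀ c < J, ContDiffOn ℝ 1 (u n c) (Set.Icc (x c) (x (c + 1))))
    (hψreg : ∀ n < N, ∀ c < J, ContDiffOn ℝ 1 (ψ n c) (Set.Icc (x c) (x (c + 1))))
    (Qh : ℝ → ℝ) (hQ : Continuous Qh)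
    (ΔW : ℕ → ℝ → ℝ) (hW : ∀ n < N, Continuous (ΔW n))
    (um : ℕ → ℕ → ℝ → ℂ)
    (hum : ∀ n c, um n c = fun t => (u n c t + u (n + 1) c t) / 2)
    (hE1 : ∀ n < N, ∀ c < J,
      Complex.I * (∫ t in (x c)..(x (c + 1)), (u (n + 1) c t - u n c t) * conj (um n c t))
        - (Δt : ℂ) * ((if c + 1 = J then ψ n 0 (x 0) else ψ n (c + 1) (x (c + 1)))
              * conj (um n c (x (c + 1)))
            - ψ n c (x c) * conj (um n c (x c)))
        + (Δt : ℂ) * (∫ t in (x c)..(x (c + 1)),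
            (ψ n c t * derivWithin (fun y => conj (um n c y)) (Set.Icc (x c) (x (c + 1))) t
              - (Qh t : ℂ) * (um n c t * conj (um n c t))))
        - (∫ t in (x c)..(x (c + 1)), um n c t * conj (um n c t) * (ΔW n t : ℂ)) = 0)
    (hE2 : ∀ n < N, ∀ c < J,
      (∫ t in (x c)..(x (c + 1)), ψ n c t * conj (ψ n c t))
        + (∫ t in (x c)..(x (c + 1)),
            um n c t * derivWithin (fun y => conj (ψ n c y)) (Set.Icc (x c) (x (c + 1))) t)
        - (um n c (x (c + 1)) * conj (ψ n c (x (c + 1)))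
            - (if c = 0 then um n (J - 1) (x J) else um n (c - 1) (x c))
                * conj (ψ n c (x c))) = 0) :
    ∑ c ∈ Finset.range J, ∫ t in (x c)..(x (c + 1)), ‖u N c t‖ ^ 2
      = ∑ c ∈ Finset.range J, ∫ t in (x c)..(x (c + 1)), ‖u 0 c t‖ ^ 2 :=
  ldg_L2_stability_general Δt J N x hx u ψ hureg hψreg Qh hQ ΔW um hum hE1 hE2
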